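/- arXiv:2408.02528 — 5 statements merged into one kernel-verified Lean document; each statement's English description precedes it below -/
import Mathlib

section
/- Let W be a nondegenerate L^1-kernel on a probability space (X, B, μ). For the branching process X_{W†} (with offspring of a type-x particle given by a Poisson point process on X with intensity W(x,z)/deg_W(z) dμ(z), and root type distributed according to μ), the expected number of particles in generation k whose type lies in a measurable set A ⊆ X equals μ(A), for every k ∈ ℕ₀ and every measurable A. -/
open MeasureTheory
open scoped ENNReal

/-- in the branching process `X_{W†}` associated to a nondegenerate
`L¹`-kernel `W`, the expected-number-of-particles measures `m k` of each generation
(defined by `m 0 = μ` and the one-step recursion via the offspring intensity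
`W(x,z)/deg_W(z) dμ(z)`) satisfy `m k A = μ A` for every `k` and measurable `A`. -/
theorem expected_generation_measure_eq
    {X : Type*} [MeasurableSpace X] (μ : Measure X) [IsProbabilityMeasure μ]
    (W : X → X → ℝ≥0∞) (hWmeas : Measurable (Function.uncurry W))
    (hWsymm : ∀ x y, W x y = W y x)
    (hL1 : ∫⁻ x, ∫⁻ y, W x y ∂μ ∂μ ≠ ⊤)
    (hnondeg : ∀ᵐ x ∂μ, 0 < ∫⁻ y, W x y ∂μ)
    (hfin : ∀ᵐ x ∂μ, ∫⁻ y, W x y ∂μ ≠ ⊤)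
    (m : ℕ → Measure X) (h0 : m 0 = μ)
    (hrec : ∀ (k : ℕ) (A : Set X), MeasurableSet A →
      m (k + 1) A = ∫⁻ x, ∫⁻ z in A, W x z / (∫⁻ w, W z w ∂μ) ∂μ ∂(m k)) :
    ∀ (k : ℕ) (A : Set X), MeasurableSet A → m k A = μ A := by
  have hdegmeas : Measurable (fun z => ∫⁻ w, W z w ∂μ) := by
    apply Measurable.lintegral_prod_right' (f := Function.uncurry W) hWmeas
  intro k
  induction k with
  | zero => intro A hA; rw [h0]
  | succ k ih =>
    intro A hA
    have hmk : m k = μ := Measure.ext fun s hs => ih s hs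
    rw [hrec k A hA, hmk]
    have hmeas2 : Measurable (Function.uncurry fun x z =>
        W x z / (∫⁻ w, W z w ∂μ)) := by
      exact hWmeas.div (hdegmeas.comp measurable_snd)
    rw [lintegral_lintegral_swap (hmeas2.aemeasurable)]
    have key : ∀ᵐ z ∂(μ.restrict A),
        (∫⁻ x, W x z / (∫⁻ w, W z w ∂μ) ∂μ) = 1 := by
      refine ae_restrict_of_ae ?_
      filter_upwards [hnondeg, hfin] with z hz hz'
      have hmx : Measurable (fun x => W x z) :=
        hWmeas.comp (measurable_id.prodMk measurable_const)
      calc (∫⁻ x, W x z / (∫⁻ w, W z w ∂μ) ∂μ)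
          = (∫⁻ x, W x z ∂μ) * (∫⁻ w, W z w ∂μ)⁻¹ := by
            simp_rw [div_eq_mul_inv]
            exact lintegral_mul_const' _ _ (by simp [hz.ne'])
        _ = (∫⁻ w, W z w ∂μ) * (∫⁻ w, W z w ∂μ)⁻¹ := by
            congr 1; exact lintegral_congr fun x => hWsymm x z
        _ = 1 := ENNReal.mul_inv_cancel hz.ne' hz'
    rw [lintegral_congr_ae key]
    simp [hA]
end

section
/- Suppose W is a bounded-degree kernel with positive minimum degree. Then the branching process X_{W†} goes extinct almost surely; equivalently, if q_{k,0} denotes the probability that generation k contains no particles, then lim_{k→∞} q_{k,0} = 1. -/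
open MeasureTheory Filter
open scoped ENNReal

/-!
The extinction probabilities `q k = P {Z k = 0}` increase (the case `j = 0` of the hypothesis),
and for `j ≠ 0` the disjoint events `{Z k = 0, Z (k+1) = 0}` and `{Z k = j, Z (k+1) = 0}` give
`q k + g ^ j * P {Z k = j} ≤ q (k + 1)`. Since `q ≤ 1`, the series `∑ₖ P {Z k = j}` converges,
so `P {Z k = j} → 0` for each `j ≠ 0`. By Markov's inequality and `E[Z k] = 1`,
`P {M ≤ Z k} ≤ 1 / M` uniformly in `k`, hence `1 ≤ lim q + 1 / M` for every `M`, and `lim q = 1`.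
-/

open Finset in
theorem ENNReal.tendsto_atTop_zero_of_add_mul_le_succ {a b : ℕ → ℝ≥0∞} {c C : ℝ≥0∞}
    (hc : c ≠ 0) (hC : C ≠ ∞) (ha : ∀ k, a k ≤ C) (h : ∀ k, a k + c * b k ≤ a (k + 1)) :
    Tendsto b atTop (nhds 0) := by
  have hsum : ∀ n, ∑ k ∈ range n, c * b k ≤ a n := by
    intro n
    induction n with
    | zero => simp
    | succ n ih =>
      rw [sum_range_succ]
      exact (add_le_add ih le_rfl).trans (h n)
  have htsum : c * ∑' k, b k ≤ C := by
    rw [← ENNReal.tsum_mul_left]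
    exact ENNReal.tsum_le_of_sum_range_le fun n => (hsum n).trans (ha n)
  refine ENNReal.tendsto_atTop_zero_of_tsum_ne_top fun htop => hC ?_
  rw [htop, ENNReal.mul_top hc] at htsum
  exact top_le_iff.1 htsum

section NatValued

variable {Ω : Type*} [MeasurableSpace Ω] (P : Measure Ω)

theorem measure_nat_le_le_inv {X : Ω → ℕ} (hX : Measurable X)
    (hmean : ∫⁻ ω, (X ω : ℝ≥0∞) ∂P ≤ 1) (M : ℕ) :
    P {ω | M ≤ X ω} ≤ (M : ℝ≥0∞)⁻¹ := by
  rw [ENNReal.le_inv_iff_mul_le, mul_comm]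
  refine le_trans ?_
    ((mul_meas_ge_le_lintegral₀ (measurable_from_top.comp hX).aemeasurable M).trans hmean)
  simp

theorem one_le_measure_eq_zero_add_sum_add_measure_le [IsProbabilityMeasure P]
    (X : Ω → ℕ) (M : ℕ) :
    1 ≤ P {ω | X ω = 0} + ∑ j ∈ Finset.Ico 1 M, P {ω | X ω = j} + P {ω | M ≤ X ω} := by
  rw [← measure_univ (μ := P)]
  calc P Set.univ
      ≤ P ({ω | X ω = 0} ∪ (⋃ j ∈ Finset.Ico 1 M, {ω | X ω = j}) ∪ {ω | M ≤ X ω}) :=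
        measure_mono fun ω _ => by
          by_cases h0 : X ω = 0
          · exact .inl (.inl h0)
          by_cases hM : M ≤ X ω
          · exact .inr hM
          exact .inl (.inr (Set.mem_iUnion₂.2 ⟨X ω, Finset.mem_Ico.2 ⟨by omega, by omega⟩, rfl⟩))
    _ ≤ _ := (measure_union_le _ _).trans <| add_le_add_left
        ((measure_union_le _ _).trans (add_le_add_right (measure_biUnion_finset_le _ _) _)) _

theorem measure_eq_zero_add_mul_le {X Y : Ω → ℕ} (hX : Measurable X) (hY : Measurable Y)
    {c : ℝ≥0∞} {j : ℕ} (hj : j ≠ 0) (h0 : P {ω | X ω = 0} ≤ P {ω | X ω = 0 ∧ Y ω = 0})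
    (hcj : c * P {ω | X ω = j} ≤ P {ω | X ω = j ∧ Y ω = 0}) :
    P {ω | X ω = 0} + c * P {ω | X ω = j} ≤ P {ω | Y ω = 0} := by
  have hdisj : Disjoint {ω | X ω = 0 ∧ Y ω = 0} {ω | X ω = j ∧ Y ω = 0} :=
    Set.disjoint_left.2 fun ω h h' => hj (h'.1.symm.trans h.1)
  have hmeas : MeasurableSet {ω | X ω = j ∧ Y ω = 0} :=
    (hX (measurableSet_singleton j)).inter (hY (measurableSet_singleton 0))
  calc P {ω | X ω = 0} + c * P {ω | X ω = j}
      ≤ P {ω | X ω = 0 ∧ Y ω = 0} + P {ω | X ω = j ∧ Y ω = 0} := add_le_add h0 hcj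
    _ = P ({ω | X ω = 0 ∧ Y ω = 0} ∪ {ω | X ω = j ∧ Y ω = 0}) :=
        (measure_union hdisj hmeas).symm
    _ ≤ P {ω | Y ω = 0} := measure_mono (Set.union_subset (fun _ h => h.2) fun _ h => h.2)

end NatValued

theorem branching_process_extinct_general
    {Ω : Type*} [MeasurableSpace Ω] (P : Measure Ω) [IsProbabilityMeasure P]
    (Z : ℕ → Ω → ℕ) (hZ : ∀ k, Measurable (Z k))
    (hmean : ∀ k, ∫⁻ ω, (Z k ω : ℝ≥0∞) ∂P = 1)
    (g : ℝ) (hg : 0 < g)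
    (hext : ∀ k j, ENNReal.ofReal (g ^ j) * P {ω | Z k ω = j} ≤
      P {ω | Z k ω = j ∧ Z (k + 1) ω = 0}) :
    Tendsto (fun k => P {ω | Z k ω = 0}) atTop (nhds 1) := by
  set q := fun k => P {ω | Z k ω = 0}
  have hstep : ∀ j ≠ 0, ∀ k, q k + ENNReal.ofReal (g ^ j) * P {ω | Z k ω = j} ≤ q (k + 1) :=
    fun j hj k => measure_eq_zero_add_mul_le P (hZ k) (hZ (k + 1)) hj
      (by simpa using hext k 0) (hext k j)
  have hq : Tendsto q atTop (nhds (⨆ k, q k)) := tendsto_atTop_iSup <|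
    monotone_nat_of_le_succ fun k => le_self_add.trans (hstep 1 one_ne_zero k)
  have hp : ∀ j ≠ 0, Tendsto (fun k => P {ω | Z k ω = j}) atTop (nhds 0) := fun j hj =>
    ENNReal.tendsto_atTop_zero_of_add_mul_le_succ (by positivity) ENNReal.one_ne_top
      (fun _ => prob_le_one) (hstep j hj)
  have hM : ∀ M : ℕ, 1 ≤ (⨆ k, q k) + (M : ℝ≥0∞)⁻¹ := by
    intro M
    refine ge_of_tendsto (x := atTop) ?_ (Eventually.of_forall fun k =>
      (one_le_measure_eq_zero_add_sum_add_measure_le P (Z k) M).trans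
        (add_le_add le_rfl (measure_nat_le_le_inv P (hZ k) (hmean k).le M)))
    simpa using (hq.add (tendsto_finsetSum _ fun j hj =>
      hp j (Nat.one_le_iff_ne_zero.1 (Finset.mem_Ico.1 hj).1))).add_const _
  have hL : 1 ≤ ⨆ k, q k := ge_of_tendsto (x := atTop)
    (by simpa using tendsto_const_nhds.add ENNReal.tendsto_inv_nat_nhds_zero)
    (Eventually.of_forall hM)
  rwa [le_antisymm (iSup_le fun _ => prob_le_one) hL] at hq

/-- extinction of the critical branching process `X_{W†}`.
`Z k` is the size of generation `k`; criticality gives `E[Z k] = 1`; once a generation is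
empty all later ones are; and if generation `k` has `j` particles, then with probability
at least `g^j` (each particle independently childless with probability at least `g`)
generation `k+1` is empty.  Conclusion: the extinction probabilities
`q_{k,0} = P[Z k = 0]` tend to `1`, i.e. `X_{W†}` goes extinct almost surely. -/
theorem branching_process_extinct
    {Ω : Type*} [MeasurableSpace Ω] (P : Measure Ω) [IsProbabilityMeasure P]
    (Z : ℕ → Ω → ℕ) (hZ : ∀ k, Measurable (Z k))
    (hmean : ∀ k, ∫⁻ ω, (Z k ω : ℝ≥0∞) ∂P = 1)
    (hmono : ∀ k ω, Z k ω = 0 → Z (k + 1) ω = 0)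
    (g : ℝ) (hg : 0 < g) (hg1 : g ≤ 1)
    (hext : ∀ k j, ENNReal.ofReal (g ^ j) * P {ω | Z k ω = j} ≤
      P {ω | Z k ω = j ∧ Z (k + 1) ω = 0}) :
    Tendsto (fun k => P {ω | Z k ω = 0}) atTop (nhds 1) :=
  branching_process_extinct_general P Z hZ hmean g hg hext
end

section
/- Let (q_{k,j})_{k,j ∈ ℕ₀} be nonnegative reals such that for each k, Σ_j q_{k,j} = 1 and Σ_j j·q_{k,j} = 1, the sequence (q_{k,0})_k is nondecreasing, and there exists g > 0 such that for every k and every J ∈ ℕ, q_{k+1,0} ≥ q_{k,0} + g^J·(q_{k,1} + ⋯ + q_{k,J}). Then lim_{k→∞} q_{k,0} = 1. -/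
/-! Markov's inequality bounds the mass beyond `J` by `1 / (J + 1)`, so once `q k 0 ≤ 1 - ε` the
mass on `{1, …, J}` is at least `ε / 2` for `J` large, and `q k 0` grows by at least
`g ^ J * ε / 2` per step. Being bounded by `1` and monotone, `q k 0` therefore cannot stay below
`1 - ε`. -/

open Filter Finset

theorem sum_range_succ_eq_add_sum_Icc {M : Type*} [AddCommMonoid M] (f : ℕ → M) (J : ℕ) :
    ∑ j ∈ range (J + 1), f j = f 0 + ∑ j ∈ Icc 1 J, f j := by
  rw [range_eq_Ico, Ico_add_one_right_eq_Icc, Icc_eq_cons_Ioc J.zero_le, sum_cons,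
    ← Icc_add_one_left_eq_Ioc, zero_add]

theorem tsum_le_sum_range_add_tsum_mul_div {p : ℕ → ℝ} (hp : ∀ j, 0 ≤ p j) (hs : Summable p)
    (hms : Summable fun j : ℕ => (j : ℝ) * p j) {J : ℕ} (hJ : 0 < J) :
    ∑' j, p j ≤ ∑ j ∈ range J, p j + (∑' j : ℕ, (j : ℝ) * p j) / J := by
  have htail : (J : ℝ) * ∑' j, p (j + J) ≤ ∑' j : ℕ, (j : ℝ) * p j :=
    calc (J : ℝ) * ∑' j, p (j + J) = ∑' j, (J : ℝ) * p (j + J) := tsum_mul_left.symm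
      _ ≤ ∑' j, ((j + J : ℕ) : ℝ) * p (j + J) := by
        refine Summable.tsum_le_tsum (fun j => ?_) (((summable_nat_add_iff J).2 hs).mul_left _)
          ((summable_nat_add_iff J).2 hms)
        gcongr
        · exact hp _
        · exact_mod_cast J.le_add_left j
      _ ≤ ∑' j : ℕ, (j : ℝ) * p j := by
        rw [← hms.sum_add_tsum_nat_add J]
        exact le_add_of_nonneg_left (sum_nonneg fun j _ => mul_nonneg j.cast_nonneg (hp j))
  rw [← hs.sum_add_tsum_nat_add J]
  gcongr
  rwa [le_div_iff₀' (by exact_mod_cast hJ)]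

theorem add_mul_le_of_forall_add_le_succ {a : ℕ → ℝ} {δ : ℝ} (h : ∀ k, a k + δ ≤ a (k + 1))
    (n : ℕ) : a 0 + n * δ ≤ a n := by
  induction n with
  | zero => simp
  | succ n ih =>
    push_cast
    linarith [h n]

theorem tendsto_one_of_forall_uniform_increment {a : ℕ → ℝ} (hmono : Monotone a)
    (hle : ∀ k, a k ≤ 1) (hinc : ∀ ε > 0, ∃ δ > 0, ∀ k, a k + ε ≤ 1 → a k + δ ≤ a (k + 1)) :
    Tendsto a atTop (nhds 1) := by
  have hbdd : BddAbove (Set.range a) := ⟨1, Set.forall_mem_range.2 hle⟩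
  have hsup_le : ⨆ k, a k ≤ 1 := ciSup_le hle
  suffices hsup : ⨆ k, a k = 1 from hsup ▸ tendsto_atTop_ciSup hmono hbdd
  by_contra hne
  obtain ⟨δ, hδ, hstep⟩ := hinc (1 - ⨆ k, a k) (sub_pos.2 (hsup_le.lt_of_ne hne))
  have hgrow := add_mul_le_of_forall_add_le_succ fun k => hstep k (by linarith [le_ciSup hbdd k])
  obtain ⟨n, hn⟩ := exists_nat_gt ((1 - a 0) / δ)
  rw [div_lt_iff₀ hδ] at hn
  linarith [hgrow n, hle n]

/-- the analytic core of the extinction lemma.  If `q k j ≥ 0` with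
`Σ_j q k j = 1`, `Σ_j j·q k j = 1`, `k ↦ q k 0` nondecreasing, and there is `g > 0`
with `q (k+1) 0 ≥ q k 0 + g^J·(q k 1 + ⋯ + q k J)` for all `k` and `J ≥ 1`, then
`q k 0 → 1`. -/
theorem extinction_analytic_core
    (q : ℕ → ℕ → ℝ) (hnn : ∀ k j, 0 ≤ q k j)
    (hsum : ∀ k, Summable (q k)) (htot : ∀ k, ∑' j, q k j = 1)
    (hmsum : ∀ k, Summable (fun j : ℕ => (j : ℝ) * q k j))
    (hmean : ∀ k, ∑' j : ℕ, (j : ℝ) * q k j = 1)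
    (hmono : Monotone fun k => q k 0)
    (g : ℝ) (hg : 0 < g)
    (hstep : ∀ k J, 1 ≤ J → q k 0 + g ^ J * ∑ j ∈ Finset.Icc 1 J, q k j ≤ q (k + 1) 0) :
    Tendsto (fun k => q k 0) atTop (nhds 1) := by
  have hle : ∀ k, q k 0 ≤ 1 := fun k => htot k ▸ (hsum k).le_tsum 0 fun j _ => hnn k j
  have htail : ∀ k J, 1 ≤ q k 0 + ∑ j ∈ Icc 1 J, q k j + 1 / (J + 1) := by
    intro k J
    have := tsum_le_sum_range_add_tsum_mul_div (hnn k) (hsum k) (hmsum k) J.succ_pos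
    rwa [htot k, hmean k, sum_range_succ_eq_add_sum_Icc, Nat.cast_succ] at this
  refine tendsto_one_of_forall_uniform_increment hmono hle fun ε hε => ?_
  obtain ⟨J, hJ⟩ := exists_nat_gt (2 / ε)
  have hJpos : (0 : ℝ) < J := (div_pos two_pos hε).trans hJ
  have hinv : 1 / (J + 1 : ℝ) ≤ ε / 2 := by
    rw [div_lt_iff₀ hε] at hJ
    rw [div_le_div_iff₀ (by positivity) two_pos]
    nlinarith
  refine ⟨g ^ J * (ε / 2), by positivity, fun k hk => ?_⟩
  calc q k 0 + g ^ J * (ε / 2) ≤ q k 0 + g ^ J * ∑ j ∈ Icc 1 J, q k j := by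
        gcongr
        linarith [htail k J]
    _ ≤ q (k + 1) 0 := hstep k J (Nat.cast_pos.1 hJpos)
end

section
/- Let G be a graph with equitable partition P = {P_j}_{j=1}^k for template (D, p), and let A be a connected component of G. Define an auxiliary graph Δ on [k] with edge jℓ whenever D_{j,ℓ} > 0. Then there exists a connected component C of Δ such that A ⊆ ⋃_{j∈C} P_j. Moreover, for all j, ℓ ∈ C, |A ∩ P_j|/|P_j| = |A ∩ P_ℓ|/|P_ℓ|. -/
open scoped BigOperators Classical

/-- if `P` is an equitable partition of `G` for template `(D, p)` and `A`
is a connected component of `G`, then `A` is contained in the union of the cells indexed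
by a single connected component `cΔ` of the auxiliary graph `Δ` (edges `jℓ` whenever
`D j ℓ > 0`), and the ratios `|A ∩ P_j|/|P_j|` agree for all `j` in that component. -/
theorem component_within_auxiliary_component
    {V : Type*} [Fintype V] [DecidableEq V] (G : SimpleGraph V)
    (k : ℕ) (P : Fin k → Finset V) (D : Fin k → Fin k → ℕ) (p : Fin k → ℝ)
    (hpos : ∀ j, 0 < p j)
    (hcell : ∀ j, (P j).Nonempty)
    (hpart : ∀ v : V, ∃! j, v ∈ P j)
    (hprop : ∀ j, ((P j).card : ℝ) = p j * (Fintype.card V))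
    (hdeg : ∀ j ℓ, ∀ v ∈ P j, ((P ℓ).filter (fun w => G.Adj v w)).card = D j ℓ)
    (A : Finset V)
    (hA : ∃ cA : G.ConnectedComponent, ∀ v, v ∈ A ↔ G.connectedComponentMk v = cA) :
    ∃ cΔ : (SimpleGraph.fromRel fun a b => 0 < D a b).ConnectedComponent,
      (∀ v ∈ A, ∃ j : Fin k,
        (SimpleGraph.fromRel fun a b => 0 < D a b).connectedComponentMk j = cΔ ∧
          v ∈ P j) ∧
      ∀ j ℓ : Fin k,
        (SimpleGraph.fromRel fun a b => 0 < D a b).connectedComponentMk j = cΔ →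
        (SimpleGraph.fromRel fun a b => 0 < D a b).connectedComponentMk ℓ = cΔ →
        ((A ∩ P j).card : ℝ) / (P j).card = ((A ∩ P ℓ).card : ℝ) / (P ℓ).card := by
  classical
  obtain ⟨cA, hcA⟩ := hA
  obtain ⟨v0, hv0⟩ := cA.exists_rep
  set Δ := SimpleGraph.fromRel fun a b => 0 < D a b with hΔ
  set f : V → Fin k := fun v => (hpart v).choose with hfdef
  have hmemP : ∀ v : V, v ∈ P (f v) := fun v => (hpart v).choose_spec.1
  -- A is closed under adjacency
  have hAcl : ∀ v ∈ A, ∀ w, G.Adj v w → w ∈ A := by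
    intro v hv w hvw
    rw [hcA] at hv ⊢
    rw [← hv]
    exact SimpleGraph.ConnectedComponent.sound hvw.symm.reachable
  -- double counting
  have hsum : ∀ (S T : Finset V) (da db : ℕ),
      (∀ v ∈ S, (T.filter (fun w => G.Adj v w)).card = da) →
      (∀ w ∈ T, (S.filter (fun v => G.Adj w v)).card = db) →
      da * S.card = db * T.card := by
    intro S T da db hS hT
    have key : ∑ v ∈ S, (T.filter (fun w => G.Adj v w)).card
        = ∑ w ∈ T, (S.filter (fun v => G.Adj w v)).card := by
      simp_rw [Finset.card_filter]
      rw [Finset.sum_comm]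
      refine Finset.sum_congr rfl fun w _ => Finset.sum_congr rfl fun v _ => ?_
      simp [G.adj_comm]
    rw [Finset.sum_congr rfl hS, Finset.sum_congr rfl hT, Finset.sum_const,
      Finset.sum_const, smul_eq_mul, smul_eq_mul, mul_comm S.card, mul_comm T.card] at key
    exact key
  have hdegA : ∀ a b : Fin k, ∀ v ∈ A ∩ P a,
      ((A ∩ P b).filter (fun w => G.Adj v w)).card = D a b := by
    intro a b v hv
    rw [Finset.mem_inter] at hv
    have heq : (A ∩ P b).filter (fun w => G.Adj v w)
        = (P b).filter (fun w => G.Adj v w) := by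
      ext w
      simp only [Finset.mem_filter, Finset.mem_inter]
      constructor
      · rintro ⟨⟨_, h2⟩, h3⟩; exact ⟨h2, h3⟩
      · rintro ⟨h2, h3⟩; exact ⟨⟨hAcl v hv.1 w h3, h2⟩, h3⟩
    rw [heq]
    exact hdeg a b v hv.2
  have hPcardpos : ∀ j, (0:ℝ) < (P j).card := fun j => by
    exact_mod_cast Finset.card_pos.mpr (hcell j)
  -- ratio equality across an edge of Δ
  have hedgeR : ∀ a b : Fin k, Δ.Adj a b →
      ((A ∩ P a).card : ℝ) / (P a).card = ((A ∩ P b).card : ℝ) / (P b).card := by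
    intro a b hab
    rw [hΔ, SimpleGraph.fromRel_adj] at hab
    obtain ⟨hne, hd⟩ := hab
    have h1 : D a b * (P a).card = D b a * (P b).card :=
      hsum (P a) (P b) _ _ (fun v hv => hdeg a b v hv) (fun w hw => hdeg b a w hw)
    have h2 : D a b * (A ∩ P a).card = D b a * (A ∩ P b).card :=
      hsum _ _ _ _ (hdegA a b) (hdegA b a)
    have hDab : 0 < D a b := by
      rcases hd with h | h
      · exact h
      · rcases Nat.eq_zero_or_pos (D a b) with h0 | h0
        · exfalso
          have hp : 0 < D b a * (P b).card :=
            Nat.mul_pos h (Finset.card_pos.mpr (hcell b))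
          rw [← h1, h0, zero_mul] at hp
          exact lt_irrefl 0 hp
        · exact h0
    rw [div_eq_div_iff (hPcardpos a).ne' (hPcardpos b).ne']
    have h1' : (D a b : ℝ) * (P a).card = (D b a : ℝ) * (P b).card := by exact_mod_cast h1
    have h2' : (D a b : ℝ) * (A ∩ P a).card = (D b a : ℝ) * (A ∩ P b).card := by
      exact_mod_cast h2
    have hD' : (D a b : ℝ) ≠ 0 := by
      exact_mod_cast hDab.ne'
    apply mul_left_cancel₀ hD'
    linear_combination ((P b).card : ℝ) * h2' - ((A ∩ P b).card : ℝ) * h1'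
  have hreachR : ∀ a b : Fin k, Δ.Reachable a b →
      ((A ∩ P a).card : ℝ) / (P a).card = ((A ∩ P b).card : ℝ) / (P b).card := by
    intro a b h
    obtain ⟨w⟩ := h
    induction w with
    | nil => rfl
    | cons h p ih => exact (hedgeR _ _ h).trans ih
  have hstep : ∀ u w : V, G.Adj u w → Δ.Reachable (f u) (f w) := by
    intro u w huw
    by_cases h : f u = f w
    · rw [h]
    · refine SimpleGraph.Adj.reachable ?_
      rw [hΔ, SimpleGraph.fromRel_adj]
      refine ⟨h, Or.inl ?_⟩
      have hwmem : w ∈ (P (f w)).filter (fun x => G.Adj u x) :=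
        Finset.mem_filter.mpr ⟨hmemP w, huw⟩
      have hc : 0 < ((P (f w)).filter (fun x => G.Adj u x)).card :=
        Finset.card_pos.mpr ⟨w, hwmem⟩
      rwa [hdeg (f u) (f w) u (hmemP u)] at hc
  have hwalkR : ∀ u w : V, G.Reachable u w → Δ.Reachable (f u) (f w) := by
    intro u w h
    obtain ⟨pth⟩ := h
    induction pth with
    | nil => exact SimpleGraph.Reachable.refl _
    | cons h pth ih => exact (hstep _ _ h).trans ih
  refine ⟨Δ.connectedComponentMk (f v0), ?_, ?_⟩
  · intro v hv
    refine ⟨f v, ?_, hmemP v⟩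
    have hr : G.Reachable v v0 := by
      have h1 : G.connectedComponentMk v = cA := (hcA v).mp hv
      exact SimpleGraph.ConnectedComponent.exact (h1.trans hv0.symm)
    exact SimpleGraph.ConnectedComponent.sound (hwalkR v v0 hr)
  · intro j ℓ hj hℓ
    exact hreachR j ℓ (SimpleGraph.ConnectedComponent.exact (hj.trans hℓ.symm))
end

section
/- Let G be a graph with equitable partition {P_j}_{j=1}^k for template (D, p), let A be a connected component of G, and let C be a connected component of the auxiliary graph Δ (edges jℓ where D_{j,ℓ} > 0) with A ⊆ V_C := ⋃_{j∈C} P_j. Then G[A] and G[V_C] are practionally isomorphic: the partitions {A ∩ P_j}_{j∈C} of A and {P_j}_{j∈C} of V_C are equitable partitions with a common template, namely degrees D_{j,ℓ} and proportions |P_j|/|V_C|. -/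
open scoped BigOperators Classical

/-- if `P` is an equitable partition of `G` for template `(D, p)`, `A` is a
connected component of `G`, and `C` is a connected component of the auxiliary graph `Δ`
(edges `jℓ` whenever `D j ℓ > 0`) with `A ⊆ V_C := ⋃_{j∈C} P_j`, then `G[A]` and
`G[V_C]` are practionally isomorphic: `{A ∩ P_j}_{j∈C}` and `{P_j}_{j∈C}` are equitable
partitions with the common template given by degrees `D j ℓ` and proportions
`|P_j|/|V_C|`. -/
theorem induced_component_practionally_isomorphic
    {V : Type*} [Fintype V] [DecidableEq V] (G : SimpleGraph V)
    (k : ℕ) (P : Fin k → Finset V) (D : Fin k → Fin k → ℕ) (p : Fin k → ℝ)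
    (hpos : ∀ j, 0 < p j)
    (hcell : ∀ j, (P j).Nonempty)
    (hpart : ∀ v : V, ∃! j, v ∈ P j)
    (hprop : ∀ j, ((P j).card : ℝ) = p j * (Fintype.card V))
    (hdeg : ∀ j ℓ, ∀ v ∈ P j, ((P ℓ).filter (fun w => G.Adj v w)).card = D j ℓ)
    (A : Finset V)
    (hA : ∃ cA : G.ConnectedComponent, ∀ v, v ∈ A ↔ G.connectedComponentMk v = cA)
    (C : Finset (Fin k))
    (hC : ∃ cΔ : (SimpleGraph.fromRel fun a b => 0 < D a b).ConnectedComponent,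
      ∀ j, j ∈ C ↔ (SimpleGraph.fromRel fun a b => 0 < D a b).connectedComponentMk j = cΔ)
    (hAC : ∀ v ∈ A, ∃ j ∈ C, v ∈ P j) :
    (∀ j ∈ C, ∀ ℓ ∈ C, ∀ v ∈ A ∩ P j,
        ((A ∩ P ℓ).filter (fun w => G.Adj v w)).card = D j ℓ) ∧
    (∀ j ∈ C, ∀ ℓ ∈ C, ∀ v ∈ P j,
        (((C.biUnion P) ∩ P ℓ).filter (fun w => G.Adj v w)).card = D j ℓ) ∧
    (∀ j ∈ C,
        ((A ∩ P j).card : ℝ) / A.card = ((P j).card : ℝ) / (C.biUnion P).card) := by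
  classical
  have hdisj : ∀ {a b : Fin k}, a ≠ b → Disjoint (P a) (P b) := by
    intro a b hab
    refine Finset.disjoint_left.2 fun v hva hvb => hab ?_
    obtain ⟨j, _, hj⟩ := hpart v
    exact (hj a hva).trans (hj b hvb).symm
  obtain ⟨cA, hcA⟩ := hA
  have hAcl : ∀ v ∈ A, ∀ w, G.Adj v w → w ∈ A := by
    intro v hv w hvw
    rw [hcA] at hv ⊢
    rw [← hv]
    exact SimpleGraph.ConnectedComponent.sound hvw.symm.reachable
  have part1 : ∀ j ∈ C, ∀ ℓ ∈ C, ∀ v ∈ A ∩ P j,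
      ((A ∩ P ℓ).filter (fun w => G.Adj v w)).card = D j ℓ := by
    intro j hj ℓ hℓ v hv
    rw [Finset.mem_inter] at hv
    have heq : (A ∩ P ℓ).filter (fun w => G.Adj v w)
        = (P ℓ).filter (fun w => G.Adj v w) := by
      ext w
      simp only [Finset.mem_filter, Finset.mem_inter]
      constructor
      · rintro ⟨⟨-, h⟩, h2⟩; exact ⟨h, h2⟩
      · rintro ⟨h, h2⟩; exact ⟨⟨hAcl v hv.1 w h2, h⟩, h2⟩
    rw [heq, hdeg j ℓ v hv.2]
  have part2 : ∀ j ∈ C, ∀ ℓ ∈ C, ∀ v ∈ P j,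
      (((C.biUnion P) ∩ P ℓ).filter (fun w => G.Adj v w)).card = D j ℓ := by
    intro j hj ℓ hℓ v hv
    have heq : (C.biUnion P) ∩ P ℓ = P ℓ :=
      Finset.inter_eq_right.2 fun w hw => Finset.mem_biUnion.2 ⟨ℓ, hℓ, hw⟩
    rw [heq, hdeg j ℓ v hv]
  refine ⟨part1, part2, ?_⟩
  -- double counting
  have dc : ∀ (S T : Finset V),
      ∑ v ∈ S, ((T.filter (fun w => G.Adj v w)).card)
        = ∑ w ∈ T, ((S.filter (fun v => G.Adj w v)).card) := by
    intro S T
    simp only [Finset.card_filter]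
    rw [Finset.sum_comm]
    refine Finset.sum_congr rfl fun w _ => Finset.sum_congr rfl fun v _ => ?_
    simp [G.adj_comm]
  have dcA : ∀ a ∈ C, ∀ b ∈ C,
      (A ∩ P a).card * D a b = (A ∩ P b).card * D b a := by
    intro a ha b hb
    have h1 : ∑ v ∈ A ∩ P a, ((A ∩ P b).filter (fun w => G.Adj v w)).card
        = (A ∩ P a).card * D a b := by
      rw [Finset.sum_congr rfl (fun v hv => part1 a ha b hb v hv),
        Finset.sum_const, smul_eq_mul]
    have h2 : ∑ w ∈ A ∩ P b, ((A ∩ P a).filter (fun v => G.Adj w v)).card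
        = (A ∩ P b).card * D b a := by
      rw [Finset.sum_congr rfl (fun w hw => part1 b hb a ha w hw),
        Finset.sum_const, smul_eq_mul]
    rw [← h1, dc, h2]
  have dcG : ∀ a b, (P a).card * D a b = (P b).card * D b a := by
    intro a b
    have h1 : ∑ v ∈ P a, ((P b).filter (fun w => G.Adj v w)).card
        = (P a).card * D a b := by
      rw [Finset.sum_congr rfl (fun v hv => hdeg a b v hv),
        Finset.sum_const, smul_eq_mul]
    have h2 : ∑ w ∈ P b, ((P a).filter (fun v => G.Adj w v)).card
        = (P b).card * D b a := by
      rw [Finset.sum_congr rfl (fun w hw => hdeg b a w hw),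
        Finset.sum_const, smul_eq_mul]
    rw [← h1, dc, h2]
  set r : Fin k → ℝ := fun j => ((A ∩ P j).card : ℝ) / ((P j).card : ℝ) with hr
  have hcellpos : ∀ j, 0 < ((P j).card : ℝ) := by
    intro j
    exact_mod_cast Finset.card_pos.2 (hcell j)
  have hstep : ∀ a ∈ C, ∀ b ∈ C, 0 < D a b → r a = r b := by
    intro a ha b hb hD
    have key : (A ∩ P a).card * (P b).card = (A ∩ P b).card * (P a).card := by
      have h1 : ((A ∩ P a).card * (P b).card) * D a b
          = ((A ∩ P b).card * (P a).card) * D a b := by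
        calc ((A ∩ P a).card * (P b).card) * D a b
            = ((A ∩ P a).card * D a b) * (P b).card := by ring
          _ = ((A ∩ P b).card * D b a) * (P b).card := by rw [dcA a ha b hb]
          _ = (A ∩ P b).card * ((P b).card * D b a) := by ring
          _ = (A ∩ P b).card * ((P a).card * D a b) := by rw [← dcG a b]
          _ = ((A ∩ P b).card * (P a).card) * D a b := by ring
      exact Nat.eq_of_mul_eq_mul_right hD h1
    rw [hr]
    rw [div_eq_div_iff (hcellpos a).ne' (hcellpos b).ne']
    exact_mod_cast key
  obtain ⟨cΔ, hcΔ⟩ := hC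
  set Δ : SimpleGraph (Fin k) := SimpleGraph.fromRel fun a b => 0 < D a b with hΔ
  have hstep' : ∀ a b, Δ.Adj a b → a ∈ C → b ∈ C → r a = r b := by
    intro a b hab ha hb
    rw [hΔ, SimpleGraph.fromRel_adj] at hab
    rcases hab.2 with h | h
    · exact hstep a ha b hb h
    · exact (hstep b hb a ha h).symm
  have hwalk : ∀ a b, Δ.Walk a b → a ∈ C → b ∈ C → r a = r b := by
    intro a b w
    induction w with
    | nil => intro _ _; rfl
    | @cons x y z h p ih =>
      intro hx hz
      have hy : y ∈ C := by
        rw [hcΔ] at hx ⊢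
        rw [← hx]
        exact SimpleGraph.ConnectedComponent.sound h.symm.reachable
      exact (hstep' x y h hx hy).trans (ih hy hz)
  have hconst : ∀ a ∈ C, ∀ b ∈ C, r a = r b := by
    intro a ha b hb
    have hreach : Δ.Reachable a b :=
      SimpleGraph.ConnectedComponent.exact (((hcΔ a).1 ha).trans ((hcΔ b).1 hb).symm)
    obtain ⟨w⟩ := hreach
    exact hwalk a b w ha hb
  -- A is nonempty, so r is positive on C
  obtain ⟨v0, hv0⟩ := cA.exists_rep
  have hv0A : v0 ∈ A := (hcA v0).2 hv0
  obtain ⟨j0, hj0C, hj0P⟩ := hAC v0 hv0A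
  have hrpos : 0 < r j0 := by
    apply div_pos _ (hcellpos j0)
    exact_mod_cast Finset.card_pos.2 ⟨v0, Finset.mem_inter.2 ⟨hv0A, hj0P⟩⟩
  -- card sums
  have hAeq : A = C.biUnion (fun j => A ∩ P j) := by
    ext v
    simp only [Finset.mem_biUnion, Finset.mem_inter]
    constructor
    · intro hv; obtain ⟨j, hjC, hjP⟩ := hAC v hv; exact ⟨j, hjC, hv, hjP⟩
    · rintro ⟨j, -, hv, -⟩; exact hv
  have hAcard : A.card = ∑ j ∈ C, (A ∩ P j).card := by
    have h := Finset.card_biUnion (s := C) (t := fun j => A ∩ P j)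
      (fun a _ b _ hab =>
        (hdisj hab).mono Finset.inter_subset_right Finset.inter_subset_right)
    rw [← hAeq] at h
    exact h
  have hVCcard : (C.biUnion P).card = ∑ j ∈ C, (P j).card :=
    Finset.card_biUnion fun a _ b _ hab => hdisj hab
  intro j hjC
  have hrj : r j = r j0 := hconst j hjC j0 hj0C
  have hrjpos : 0 < r j := hrj ▸ hrpos
  have hcells : ∀ ℓ ∈ C, ((A ∩ P ℓ).card : ℝ) = r j * (P ℓ).card := by
    intro ℓ hℓ
    have : r ℓ = r j := hconst ℓ hℓ j hjC
    rw [← this, hr]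
    rw [div_mul_cancel₀ _ (hcellpos ℓ).ne']
  have hAsum : (A.card : ℝ) = r j * (C.biUnion P).card := by
    rw [hAcard, hVCcard]
    push_cast
    rw [Finset.mul_sum]
    exact Finset.sum_congr rfl fun ℓ hℓ => hcells ℓ hℓ
  rw [hcells j hjC, hAsum, mul_div_mul_left _ _ hrjpos.ne']
end
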